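/- Let M = (E, I) be a matroid whose ground set is partitioned among n players with XOS valuations v_i : 2^{E_i} → ℝ≥0, and fix a selection rule g mapping each bid profile b : E → ℝ≥0 to some S ∈ I maximizing Σ_{t∈S} b_t over I. Suppose the bid profile b is a pure Nash equilibrium: for every player i and every alternative bid vector b'_i : E_i → ℝ≥0, letting b' agree with b'_i on E_i and with b elsewhere, v_i(g(b) ∩ E_i) − Σ_{t∈g(b)∩E_i} b_t ≥ v_i(g(b') ∩ E_i) − Σ_{t∈g(b')∩E_i} b'_i(t). Then the equilibrium welfare satisfies Σ_{i=1}^n v_i(g(b) ∩ E_i) ≥ (1/3)·OPT(v). (Every pure Nash equilibrium of the greedy first-price matroid mechanism achieves at least 1/3 of the optimal welfare.) -/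

import Mathlib

/-- A matroid on a finite ground set, given by its family of independent sets. -/
structure FinMatroid (E : Type*) [DecidableEq E] [Fintype E] where
  Indep : Finset E → Prop
  empty_indep : Indep ∅
  indep_subset : ∀ ⦃A B : Finset E⦄, Indep B → A ⊆ B → Indep A
  indep_exchange : ∀ ⦃A B : Finset E⦄, Indep A → Indep B → A.card < B.card →
    ∃ x ∈ B \ A, Indep (insert x A)

/-- `v` is an XOS (fractionally subadditive) valuation: a pointwise maximum of a
finite nonempty family of additive valuations with nonnegative weights. -/
def IsXOS {E : Type*} [DecidableEq E] (v : Finset E → ℝ) : Prop :=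
  ∃ L : Finset (E → ℝ), L.Nonempty ∧ (∀ w ∈ L, ∀ t, 0 ≤ w t) ∧
    ∀ X : Finset E, (∃ w ∈ L, v X = ∑ t ∈ X, w t) ∧ (∀ w ∈ L, ∑ t ∈ X, w t ≤ v X)

/-!
Let `S = g b` and let `O i` be player `i`'s share of `Sopt`. An exchange property of matroids
yields pairwise disjoint `Z i ⊆ S` with `(S \ Z i) ∪ O i` independent; it follows, by induction
on the number of parts, from the matroid partition theorem for two matroids, whose own induction
adds each new element to whichever side keeps the rank condition `|A| ≤ r₁ A + r₂ A`
(submodularity guarantees that one of them does).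

If player `i` bids `2/3` of an additive function supporting `v i` at `O i`, the new outcome weighs
at least as much as `(S \ Z i) ∪ O i`, which bounds her winning bids from below, while by XOS
they are at most `2/3` of her value for what she wins. The Nash condition then gives
`2/3 · v i (O i) ≤ 2 · v i (S i) - b (S i) + b (Z i)`, and summing over `i` with
`∑ b (Z i) ≤ b S = ∑ b (S i)` gives the bound.
-/

open Finset

theorem Finset.card_lt_insert_left_or_right_of_submodular {α : Type*} [DecidableEq α]
    {f g : Finset α → ℕ}
    (hf : ∀ X Y, f (X ∪ Y) + f (X ∩ Y) ≤ f X + f Y)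
    (hg : ∀ X Y, g (X ∪ Y) + g (X ∩ Y) ≤ g X + g Y) {s : α} {S : Finset α} (hs : s ∉ S)
    (h : ∀ A ⊆ insert s S, A.card ≤ f A + g A) :
    (∀ A ⊆ S, A.card < f (insert s A) + g A) ∨ (∀ A ⊆ S, A.card < f A + g (insert s A)) := by
  by_contra! ⟨⟨A, hAS, hA⟩, ⟨B, hBS, hB⟩⟩
  have hsA : s ∉ A := fun h => hs (hAS h)
  have hsB : s ∉ B := fun h => hs (hBS h)
  have hf' := hf (insert s A) B
  have hg' := hg A (insert s B)
  rw [insert_union, insert_inter_of_notMem hsB] at hf'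
  rw [union_insert, inter_insert_of_notMem hsA] at hg'
  have hunion := h (insert s (A ∪ B)) (insert_subset_insert s (union_subset hAS hBS))
  have hinter := h (A ∩ B) ((inter_subset_left.trans hAS).trans (subset_insert s S))
  rw [card_insert_of_notMem (fun h => hs (union_subset hAS hBS h))] at hunion
  have := card_union_add_card_inter A B
  omega

namespace FinMatroid

variable {E : Type*} [DecidableEq E] [Fintype E]

open Classical in
noncomputable def rk (M : FinMatroid E) (A : Finset E) : ℕ :=
  A.powerset.sup fun X => if M.Indep X then X.card else 0

variable {M : FinMatroid E} {A I X : Finset E}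

theorem Indep.card_le_rk (hX : M.Indep X) (hXA : X ⊆ A) : X.card ≤ M.rk A := by
  classical
  rw [rk]
  simpa [hX] using le_sup (f := fun X => if M.Indep X then X.card else 0) (mem_powerset.2 hXA)

theorem exists_indep_card_eq_rk (M : FinMatroid E) (A : Finset E) :
    ∃ X ⊆ A, M.Indep X ∧ X.card = M.rk A := by
  classical
  obtain ⟨X, hX, hsup⟩ := exists_mem_eq_sup A.powerset ⟨∅, empty_mem_powerset A⟩
    fun X => if M.Indep X then X.card else 0
  by_cases h : M.Indep X
  · exact ⟨X, mem_powerset.1 hX, h, by rw [rk, hsup, if_pos h]⟩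
  · exact ⟨∅, empty_subset A, M.empty_indep, by rw [rk, hsup, if_neg h, card_empty]⟩

theorem rk_le_card (M : FinMatroid E) (A : Finset E) : M.rk A ≤ A.card := by
  obtain ⟨X, hXA, -, hX⟩ := M.exists_indep_card_eq_rk A
  exact hX ▸ card_le_card hXA

theorem indep_of_card_le_rk (h : A.card ≤ M.rk A) : M.Indep A := by
  obtain ⟨X, hXA, hX, hcard⟩ := M.exists_indep_card_eq_rk A
  rwa [← eq_of_subset_of_card_le hXA (hcard ▸ h)]

theorem Indep.exists_superset_card_eq_rk (hI : M.Indep I) (hIA : I ⊆ A) :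
    ∃ J, I ⊆ J ∧ J ⊆ A ∧ M.Indep J ∧ J.card = M.rk A := by
  classical
  obtain ⟨J, hJ, hmax⟩ := exists_max_image (A.powerset.filter fun J => I ⊆ J ∧ M.Indep J) card
    ⟨I, by simp [hIA, hI]⟩
  simp only [mem_filter, mem_powerset, and_imp] at hJ hmax
  obtain ⟨hJA, hIJ, hJ⟩ := hJ
  refine ⟨J, hIJ, hJA, hJ, (hJ.card_le_rk hJA).antisymm (not_lt.1 fun hlt => ?_)⟩
  obtain ⟨B, hBA, hB, hBcard⟩ := M.exists_indep_card_eq_rk A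
  obtain ⟨x, hx, hxJ⟩ := M.indep_exchange hJ hB (hBcard ▸ hlt)
  rw [mem_sdiff] at hx
  have := hmax (insert x J) (insert_subset (hBA hx.1) hJA) (hIJ.trans (subset_insert x J)) hxJ
  rw [card_insert_of_notMem hx.2] at this
  omega

theorem rk_union_add_rk_inter_le (M : FinMatroid E) (X Y : Finset E) :
    M.rk (X ∪ Y) + M.rk (X ∩ Y) ≤ M.rk X + M.rk Y := by
  obtain ⟨I, hIXY, hI, hIcard⟩ := M.exists_indep_card_eq_rk (X ∩ Y)
  obtain ⟨J, hIJ, hJXY, hJ, hJcard⟩ :=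
    hI.exists_superset_card_eq_rk (hIXY.trans (inter_subset_left.trans subset_union_left))
  have hJX : (J ∩ X).card ≤ M.rk X :=
    (M.indep_subset hJ inter_subset_left).card_le_rk inter_subset_right
  have hJY : (J ∩ Y).card ≤ M.rk Y :=
    (M.indep_subset hJ inter_subset_left).card_le_rk inter_subset_right
  have hunion : J ∩ X ∪ J ∩ Y = J := by rw [← inter_union_distrib_left, inter_eq_left.2 hJXY]
  have hinter : I ⊆ J ∩ X ∩ (J ∩ Y) :=
    subset_inter (subset_inter hIJ (hIXY.trans inter_subset_left))
      (subset_inter hIJ (hIXY.trans inter_subset_right))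
  have := card_union_add_card_inter (J ∩ X) (J ∩ Y)
  rw [hunion] at this
  have := card_le_card hinter
  omega

def contract (M : FinMatroid E) (C : Finset E) (hC : M.Indep C) : FinMatroid E where
  Indep X := Disjoint X C ∧ M.Indep (X ∪ C)
  empty_indep := ⟨disjoint_empty_left C, by simpa using hC⟩
  indep_subset _ _ hB hAB :=
    ⟨hB.1.mono_left hAB, M.indep_subset hB.2 (union_subset_union_left hAB)⟩
  indep_exchange A B hA hB hcard := by
    obtain ⟨x, hx, hins⟩ := M.indep_exchange hA.2 hB.2 (by
      rw [card_union_of_disjoint hA.1, card_union_of_disjoint hB.1]; omega)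
    simp only [mem_sdiff, mem_union, not_or] at hx
    have hxB : x ∈ B := hx.1.resolve_right hx.2.2
    refine ⟨x, mem_sdiff.2 ⟨hxB, hx.2.1⟩, disjoint_insert_left.2 ⟨hx.2.2, hA.1⟩, ?_⟩
    rwa [insert_union]

theorem rk_contract_add_card {C : Finset E} (hC : M.Indep C) (X : Finset E) :
    (M.contract C hC).rk X + C.card = M.rk (X ∪ C) := by
  apply le_antisymm
  · obtain ⟨Y, hYX, ⟨hYC, hY⟩, hYcard⟩ := (M.contract C hC).exists_indep_card_eq_rk X
    have := hY.card_le_rk (union_subset_union_left hYX)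
    rw [card_union_of_disjoint hYC] at this
    omega
  · obtain ⟨J, hCJ, hJXC, hJ, hJcard⟩ := hC.exists_superset_card_eq_rk subset_union_right
    have hJC : (J \ C) ∪ C = J := sdiff_union_of_subset hCJ
    have hJCX : J \ C ⊆ X := fun t ht => by
      have := hJXC (mem_sdiff.1 ht).1
      simp only [mem_union] at this
      exact this.resolve_right (mem_sdiff.1 ht).2
    have hJCind : (M.contract C hC).Indep (J \ C) := ⟨sdiff_disjoint, by rwa [hJC]⟩
    have := hJCind.card_le_rk hJCX
    rw [card_sdiff_of_subset hCJ] at this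
    have := card_le_card hCJ
    omega

theorem card_le_rk_contract_add_rk_contract {C D : Finset E} (hA : M.Indep A)
    (hCD : M.Indep (C ∪ D)) (hdisj : Disjoint C D) :
    A.card ≤ (M.contract C (M.indep_subset hCD subset_union_left)).rk A +
      (M.contract D (M.indep_subset hCD subset_union_right)).rk A := by
  have hC := rk_contract_add_card (M.indep_subset hCD subset_union_left) A
  have hD := rk_contract_add_card (M.indep_subset hCD subset_union_right) A
  have hsub := M.rk_union_add_rk_inter_le (A ∪ C) (A ∪ D)
  have hinter : (A ∪ C) ∩ (A ∪ D) = A := by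
    rw [← union_inter_distrib_left, disjoint_iff_inter_eq_empty.1 hdisj, union_empty]
  rw [hinter] at hsub
  have hAA := hA.card_le_rk (subset_refl A)
  have hCDA := hCD.card_le_rk (show C ∪ D ⊆ A ∪ C ∪ (A ∪ D) by grind)
  rw [card_union_of_disjoint hdisj] at hCDA
  omega

theorem exists_contract_singleton_card_le_rk_add_rk {N₁ N₂ : FinMatroid E} {s : E}
    {S : Finset E} (h : ∀ A ⊆ S, A.card < N₁.rk (insert s A) + N₂.rk A) :
    ∃ hs : N₁.Indep {s}, ∀ A ⊆ S, A.card ≤ (N₁.contract {s} hs).rk A + N₂.rk A := by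
  have hs : N₁.Indep {s} := indep_of_card_le_rk <| by
    have h₀ := h ∅ (empty_subset S)
    have hrk₀ := N₂.rk_le_card ∅
    simp only [insert_empty, card_empty, card_singleton] at h₀ hrk₀ ⊢
    omega
  refine ⟨hs, fun A hA => ?_⟩
  have := rk_contract_add_card hs A
  rw [union_singleton, card_singleton] at this
  have := h A hA
  omega

theorem exists_union_eq_of_card_le_rk_add_rk (N₁ N₂ : FinMatroid E) (S : Finset E)
    (h : ∀ A ⊆ S, A.card ≤ N₁.rk A + N₂.rk A) :
    ∃ Z₁ Z₂, Z₁ ∪ Z₂ = S ∧ N₁.Indep Z₁ ∧ N₂.Indep Z₂ := by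
  induction S using Finset.induction_on generalizing N₁ N₂ with
  | empty => exact ⟨∅, ∅, union_empty ∅, N₁.empty_indep, N₂.empty_indep⟩
  | insert s S hs ih =>
    rcases card_lt_insert_left_or_right_of_submodular N₁.rk_union_add_rk_inter_le
      N₂.rk_union_add_rk_inter_le hs h with h₁ | h₂
    · obtain ⟨hs, hcard⟩ := exists_contract_singleton_card_le_rk_add_rk h₁
      obtain ⟨Z₁, Z₂, hZ, hZ₁, hZ₂⟩ := ih _ _ hcard
      exact ⟨insert s Z₁, Z₂, by rw [insert_union, hZ], union_singleton s Z₁ ▸ hZ₁.2, hZ₂⟩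
    · obtain ⟨hs, hcard⟩ := exists_contract_singleton_card_le_rk_add_rk (N₁ := N₂) (N₂ := N₁)
        fun A hA => (h₂ A hA).trans_eq (add_comm _ _)
      obtain ⟨Z₁, Z₂, hZ, hZ₁, hZ₂⟩ := ih _ _ fun A hA => (hcard A hA).trans_eq (add_comm _ _)
      exact ⟨Z₁, insert s Z₂, by rw [union_insert, hZ], hZ₁, union_singleton s Z₂ ▸ hZ₂.2⟩

theorem exists_pairwiseDisjoint_exchange {ι : Type*} [DecidableEq ι] (M : FinMatroid E)
    {S : Finset E} (hS : M.Indep S) (s : Finset ι) (O : ι → Finset E)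
    (hO : M.Indep (s.biUnion O)) (hOdisj : (s : Set ι).PairwiseDisjoint O) :
    ∃ Z : ι → Finset E, (∀ i ∈ s, Z i ⊆ S) ∧ (s : Set ι).PairwiseDisjoint Z ∧
      ∀ i ∈ s, M.Indep ((S \ Z i) ∪ O i) := by
  induction s using Finset.induction_on generalizing M S with
  | empty => exact ⟨fun _ => ∅, by simp, by simp, by simp⟩
  | insert i s hi ih =>
    rw [biUnion_insert] at hO
    rw [coe_insert, Set.pairwiseDisjoint_insert_of_notMem (by simpa using hi)] at hOdisj
    have hOR : Disjoint (O i) (s.biUnion O) :=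
      (disjoint_biUnion_right _ _ _).2 fun j hj => hOdisj.2 j hj
    obtain ⟨Z₁, Z₂, hZ, hZ₁, hZ₂⟩ := exists_union_eq_of_card_le_rk_add_rk _ _ S
      fun A hA => card_le_rk_contract_add_rk_contract (M.indep_subset hS hA) hO hOR
    have hY : S \ Z₁ ⊆ Z₂ := by rw [← hZ]; grind
    have hYind : M.Indep (S \ Z₁) := M.indep_subset hZ₂.2 (hY.trans subset_union_left)
    have hZ₁S : Z₁ ⊆ S := hZ ▸ subset_union_left
    obtain ⟨Z, hZS, hZdisj, hZind⟩ := ih (M.contract (S \ Z₁) hYind)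
      (S := Z₁) ⟨disjoint_sdiff, by rwa [union_sdiff_of_subset hZ₁S]⟩
      ⟨(hZ₂.1.mono_left hY).symm, M.indep_subset hZ₂.2 (by grind)⟩ hOdisj.1
    refine ⟨Function.update Z i (S \ Z₁), ?_, ?_, ?_⟩
    · intro j hj
      rcases eq_or_ne j i with rfl | hji
      · simp
      · rw [Function.update_of_ne hji]
        exact (hZS j (mem_of_mem_insert_of_ne hj hji)).trans hZ₁S
    · rw [coe_insert, Set.pairwiseDisjoint_insert_of_notMem (by simpa using hi)]
      refine ⟨hZdisj.mono_on fun j hj => ?_, fun j hj => ?_⟩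
      · rw [Function.update_of_ne (ne_of_mem_of_not_mem hj hi)]
      · rw [Function.update_self, Function.update_of_ne (ne_of_mem_of_not_mem hj hi)]
        exact disjoint_sdiff_self_left.mono_right (hZS j hj)
    · intro j hj
      rcases eq_or_ne j i with rfl | hji
      · rw [Function.update_self, Finset.sdiff_sdiff_eq_self hZ₁S]
        exact hZ₁.2
      · rw [Function.update_of_ne hji]
        have hZj := hZS j (mem_of_mem_insert_of_ne hj hji)
        convert (hZind j (mem_of_mem_insert_of_ne hj hji)).2 using 1
        ext x
        have := @hZj x
        have := @hZ₁S x
        simp only [mem_union, mem_sdiff]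
        tauto

end FinMatroid

section Mechanism

variable {E ι : Type*} [DecidableEq E] [DecidableEq ι]

theorem IsXOS.exists_supporting_weights {v : Finset E → ℝ} (hv : IsXOS v) (X : Finset E) :
    ∃ w : E → ℝ, (∀ t, 0 ≤ w t) ∧ v X = ∑ t ∈ X, w t ∧ ∀ Y, ∑ t ∈ Y, w t ≤ v Y := by
  obtain ⟨L, -, hL, hv⟩ := hv
  obtain ⟨w, hw, hX⟩ := (hv X).1
  exact ⟨w, hL w hw, hX, fun Y => (hv Y).2 w hw⟩

def NoProfitableDeviation (g : (E → ℝ) → Finset E) (player : E → ι) (i : ι)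
    (v : Finset E → ℝ) (b : E → ℝ) : Prop :=
  ∀ b' : E → ℝ, (∀ t, 0 ≤ b' t) →
    v ((g (fun t => if player t = i then b' t else b t)).filter (fun t => player t = i)) -
        ∑ t ∈ (g (fun t => if player t = i then b' t else b t)).filter
          (fun t => player t = i), b' t ≤
      v ((g b).filter (fun t => player t = i)) - ∑ t ∈ (g b).filter (fun t => player t = i), b t

variable [Fintype E] {M : FinMatroid E} {g : (E → ℝ) → Finset E}
  {player : E → ι} {i : ι} {b : E → ℝ}

def IsMaxWeightRule (M : FinMatroid E) (g : (E → ℝ) → Finset E) : Prop :=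
  ∀ b : E → ℝ, (∀ t, 0 ≤ b t) →
    M.Indep (g b) ∧ ∀ S : Finset E, M.Indep S → ∑ t ∈ S, b t ≤ ∑ t ∈ g b, b t

theorem IsMaxWeightRule.sum_sub_sum_le_sum_deviation (hg : IsMaxWeightRule M g)
    (hb : ∀ t, 0 ≤ b t) {β : E → ℝ} (hβ : ∀ t, 0 ≤ β t) {V : Finset E} (hV : M.Indep V) :
    ∑ t ∈ V, (if player t = i then β t else b t) - ∑ t ∈ g b, b t ≤
      ∑ t ∈ (g fun t => if player t = i then β t else b t).filter (fun t => player t = i),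
        β t := by
  set c : E → ℝ := fun t => if player t = i then β t else b t
  have hc : ∀ t, 0 ≤ c t := fun t => by
    simp only [c]
    split_ifs
    exacts [hβ t, hb t]
  obtain ⟨hT, hTmax⟩ := hg c hc
  have hcT : ∑ t ∈ g c, c t = _ := sum_ite β b
  have hbT : ∑ t ∈ (g c).filter (fun t => ¬player t = i), b t ≤ ∑ t ∈ g c, b t :=
    sum_le_sum_of_subset_of_nonneg (filter_subset _ _) fun t _ _ => hb t
  linarith [hTmax V hV, (hg b hb).2 (g c) hT]

theorem IsMaxWeightRule.two_thirds_value_add_le_of_nash (hg : IsMaxWeightRule M g)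
    (hb : ∀ t, 0 ≤ b t) {v : Finset E → ℝ} (hv : IsXOS v) {O V : Finset E}
    (hO : ∀ t ∈ O, player t = i) (hV : M.Indep V) (hOV : O ⊆ V)
    (hNash : NoProfitableDeviation g player i v b) :
    2 / 3 * v O + ∑ t ∈ V.filter (fun t => ¬player t = i), b t ≤
      2 * (v ((g b).filter (fun t => player t = i)) -
        ∑ t ∈ (g b).filter (fun t => player t = i), b t) + ∑ t ∈ g b, b t := by
  obtain ⟨w, hw, hvO, hwv⟩ := hv.exists_supporting_weights O
  set β : E → ℝ := fun t => if t ∈ O then 2 / 3 * w t else 0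
  have hβ : ∀ t, 0 ≤ β t := fun t => by
    simp only [β]
    split_ifs
    exacts [by linarith [hw t], le_rfl]
  have hβw : ∀ t, β t ≤ 2 / 3 * w t := fun t => by
    simp only [β]
    split_ifs
    exacts [le_rfl, by linarith [hw t]]
  have hβV : ∑ t ∈ V.filter (fun t => player t = i), β t = 2 / 3 * v O := by
    rw [sum_ite_mem, inter_eq_right.2 fun t ht => mem_filter.2 ⟨hOV ht, hO t ht⟩, ← mul_sum, hvO]
  have hβT : ∑ t ∈ (g fun t => if player t = i then β t else b t).filter
      (fun t => player t = i), β t ≤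
      2 / 3 * v ((g fun t => if player t = i then β t else b t).filter (fun t => player t = i)) :=
    (sum_le_sum fun t _ => hβw t).trans_eq (mul_sum _ _ _).symm |>.trans
      (mul_le_mul_of_nonneg_left (hwv _) (by norm_num))
  have hVsplit : ∑ t ∈ V, (if player t = i then β t else b t) = _ := sum_ite β b
  linarith [hg.sum_sub_sum_le_sum_deviation hb hβ hV (player := player) (i := i), hNash β hβ]

theorem IsMaxWeightRule.two_thirds_value_le_of_nash (hg : IsMaxWeightRule M g)
    (hb : ∀ t, 0 ≤ b t) {v : Finset E → ℝ} (hv : IsXOS v) {O Z : Finset E}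
    (hO : ∀ t ∈ O, player t = i) (hV : M.Indep ((g b \ Z) ∪ O))
    (hNash : NoProfitableDeviation g player i v b) :
    2 / 3 * v O ≤ 2 * v ((g b).filter (fun t => player t = i)) -
      ∑ t ∈ (g b).filter (fun t => player t = i), b t + ∑ t ∈ Z, b t := by
  set S := (g b).filter fun t => ¬player t = i
  have hSZ : ∑ t ∈ S.filter (· ∉ Z), b t ≤
      ∑ t ∈ ((g b \ Z) ∪ O).filter (fun t => ¬player t = i), b t :=
    sum_le_sum_of_subset_of_nonneg (fun t ht => by simp_all [S]) fun t _ _ => hb t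
  have hZ : ∑ t ∈ S.filter (· ∈ Z), b t ≤ ∑ t ∈ Z, b t :=
    sum_le_sum_of_subset_of_nonneg (fun t ht => (mem_filter.1 ht).2) fun t _ _ => hb t
  linarith [hg.two_thirds_value_add_le_of_nash hb hv hO hV subset_union_right hNash,
    sum_filter_add_sum_filter_not (g b) (fun t => player t = i) b,
    sum_filter_add_sum_filter_not S (· ∈ Z) b]

end Mechanism

theorem greedy_matroid_poa_general
    {E : Type*} [DecidableEq E] [Fintype E] (M : FinMatroid E)
    (n : ℕ) (player : E → Fin n)
    (v : Fin n → Finset E → ℝ) (hv : ∀ i, IsXOS (v i))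
    (g : (E → ℝ) → Finset E)
    (hg : ∀ b : E → ℝ, (∀ t, 0 ≤ b t) → M.Indep (g b) ∧
      ∀ S : Finset E, M.Indep S → ∑ t ∈ S, b t ≤ ∑ t ∈ g b, b t)
    (Sopt : Finset E) (hSopt : M.Indep Sopt)
    (b : E → ℝ) (hb : ∀ t, 0 ≤ b t)
    (hNash : ∀ i : Fin n, ∀ b' : E → ℝ, (∀ t, 0 ≤ b' t) →
      (v i ((g b).filter (fun t => player t = i)) -
          ∑ t ∈ (g b).filter (fun t => player t = i), b t) ≥
        (v i ((g (fun t => if player t = i then b' t else b t)).filter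
              (fun t => player t = i)) -
          ∑ t ∈ (g (fun t => if player t = i then b' t else b t)).filter
              (fun t => player t = i), b' t)) :
    (∑ i : Fin n, v i ((g b).filter (fun t => player t = i))) ≥
      (1/3) * ∑ i : Fin n, v i (Sopt.filter (fun t => player t = i)) := by
  have hg : IsMaxWeightRule M g := hg
  obtain ⟨Z, hZS, hZdisj, hZind⟩ := M.exists_pairwiseDisjoint_exchange (hg b hb).1 univ
    (fun i => Sopt.filter fun t => player t = i)
    (M.indep_subset hSopt (biUnion_subset.2 fun i _ => filter_subset _ _))
    fun i _ j _ hij => disjoint_filter.2 fun t _ hi hj => hij (hi ▸ hj)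
  have hplayer i := hg.two_thirds_value_le_of_nash hb (hv i) (fun t ht => (mem_filter.1 ht).2)
    (hZind i (mem_univ i)) (hNash i)
  have hZ : ∑ i, ∑ t ∈ Z i, b t ≤ ∑ t ∈ g b, b t := by
    rw [← sum_biUnion hZdisj]
    exact sum_le_sum_of_subset_of_nonneg (biUnion_subset.2 hZS) fun t _ _ => hb t
  have hsum := sum_le_sum fun i (_ : i ∈ univ) => hplayer i
  rw [← mul_sum, sum_add_distrib, sum_sub_distrib, ← mul_sum, sum_fiberwise] at hsum
  linarith

/-- **Price of anarchy of the greedy first-price matroid mechanism.**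
The ground set is partitioned among `n` players via `player : E → Fin n`, each with
an XOS valuation.  `g` is a selection rule mapping each nonnegative bid profile to a
max-weight independent set (the greedy outcome); player `i` receives `g b ∩ E_i` and
pays her bids there.  If the nonnegative bid profile `b` is a pure Nash equilibrium,
then the equilibrium welfare is at least `(1/3)·OPT(v)`, where `Sopt` attains the
optimal welfare `OPT(v)` over independent sets. -/
theorem greedy_matroid_poa
    {E : Type*} [DecidableEq E] [Fintype E] (M : FinMatroid E)
    (n : ℕ) (player : E → Fin n)
    (v : Fin n → Finset E → ℝ) (hv : ∀ i, IsXOS (v i))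
    (g : (E → ℝ) → Finset E)
    (hg : ∀ b : E → ℝ, (∀ t, 0 ≤ b t) → M.Indep (g b) ∧
      ∀ S : Finset E, M.Indep S → ∑ t ∈ S, b t ≤ ∑ t ∈ g b, b t)
    (Sopt : Finset E) (hSopt : M.Indep Sopt)
    (hSoptOpt : ∀ S : Finset E, M.Indep S →
      (∑ i : Fin n, v i (S.filter (fun t => player t = i))) ≤
        ∑ i : Fin n, v i (Sopt.filter (fun t => player t = i)))
    (b : E → ℝ) (hb : ∀ t, 0 ≤ b t)
    (hNash : ∀ i : Fin n, ∀ b' : E → ℝ, (∀ t, 0 ≤ b' t) →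
      (v i ((g b).filter (fun t => player t = i)) -
          ∑ t ∈ (g b).filter (fun t => player t = i), b t) ≥
        (v i ((g (fun t => if player t = i then b' t else b t)).filter
              (fun t => player t = i)) -
          ∑ t ∈ (g (fun t => if player t = i then b' t else b t)).filter
              (fun t => player t = i), b' t)) :
    (∑ i : Fin n, v i ((g b).filter (fun t => player t = i))) ≥
      (1/3) * ∑ i : Fin n, v i (Sopt.filter (fun t => player t = i)) :=
  greedy_matroid_poa_general M n player v hv g hg Sopt hSopt b hb hNash
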